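/- arXiv:1812.01581 — 7 statements merged into one kernel-verified Lean document; each statement's English description precedes it below -/
import Mathlib

section
/- If k is even and positive, every 3×k matrix with entries in ℤ/kℤ contains a fair 2×2 submatrix: there exist rows i ≠ j and columns p ≠ q with x(i,p) + x(j,q) = x(i,q) + x(j,p). -/
/-!
Suppose no 2×2 submatrix is fair. Fairness of rows `i, j` and columns `p, q` says exactly that
the column differences `x i - x j` agree at `p` and `q`, so each of the maps `x 0 - x 1`,
`x 1 - x 2` and their sum `x 0 - x 2` is injective, hence a bijection `Fin k → ZMod k`.
Summing over all columns then gives `S + S = S` for `S = ∑ y : ZMod k, y`, so `S = 0`.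
But for `k = 2m` Gauss' formula gives `S = m ≠ 0`.
-/

open Finset Function

theorem ZMod.sum_univ_eq_sum_range (k : ℕ) [NeZero k] :
    ∑ y : ZMod k, y = ∑ i ∈ range k, (i : ZMod k) :=
  sum_nbij' ZMod.val Nat.cast (fun y _ => mem_range.mpr (ZMod.val_lt y)) (fun _ _ => mem_univ _)
    (fun y _ => ZMod.natCast_zmod_val y) (fun _ hi => ZMod.val_cast_of_lt (mem_range.mp hi))
    fun y _ => (ZMod.natCast_zmod_val y).symm

theorem ZMod.sum_univ_two_mul (m : ℕ) [NeZero m] : ∑ y : ZMod (2 * m), y = m := by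
  have hgauss : (∑ i ∈ range (2 * m), i) + m = 2 * m * m := by
    have h := sum_range_id_mul_two (2 * m)
    have : 1 ≤ 2 * m := by have := NeZero.pos m; omega
    zify [this] at h ⊢
    linarith
  have hcast := congrArg (Nat.cast : ℕ → ZMod (2 * m)) hgauss
  rw [Nat.cast_add, Nat.cast_sum, Nat.cast_mul, ZMod.natCast_self, zero_mul] at hcast
  have htwo : (2 * m : ZMod (2 * m)) = 0 := by exact_mod_cast ZMod.natCast_self (2 * m)
  rw [ZMod.sum_univ_eq_sum_range]
  linear_combination hcast - htwo

theorem ZMod.sum_univ_ne_zero_of_even (k : ℕ) [NeZero k] (hk : Even k) :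
    ∑ y : ZMod k, y ≠ 0 := by
  obtain ⟨m, hm⟩ := hk
  obtain rfl : k = 2 * m := by omega
  have hm0 : 0 < m := by have := NeZero.pos (2 * m); omega
  have : NeZero m := ⟨hm0.ne'⟩
  rw [ZMod.sum_univ_two_mul, Ne, ZMod.natCast_eq_zero_iff]
  intro hdvd
  have := Nat.le_of_dvd hm0 hdvd
  omega

/-- The sum-of-elements obstruction to complete mappings (orthomorphisms) of an abelian group. -/
theorem Fintype.sum_univ_eq_zero_of_bijective_add {ι G : Type*} [Fintype ι] [AddCommGroup G]
    [Fintype G] {f g : ι → G} (hf : Bijective f) (hg : Bijective g) (hfg : Bijective (f + g)) :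
    ∑ a : G, a = 0 := by
  refine (left_eq_add (a := ∑ a : G, a)).mp ?_
  calc ∑ a : G, a = ∑ i, (f + g) i := (hfg.sum_comp fun a => a).symm
    _ = ∑ i, f i + ∑ i, g i := sum_add_distrib
    _ = ∑ a : G, a + ∑ a : G, a := by rw [hf.sum_comp fun a => a, hg.sum_comp fun a => a]

theorem injective_sub_of_forall_add_ne {ι R : Type*} [AddCommGroup R] (u v : ι → R)
    (h : ∀ p q, p ≠ q → u p + v q ≠ u q + v p) : Injective (u - v) := by
  intro p q hpq
  by_contra hne
  exact h p q hne (sub_eq_sub_iff_add_eq_add.mp hpq)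

theorem fair_submatrix_three_rows (k : ℕ) (hk : 0 < k) (hke : Even k)
    (x : Fin 3 → Fin k → ZMod k) :
    ∃ i j : Fin 3, ∃ p q : Fin k, i ≠ j ∧ p ≠ q ∧
      x i p + x j q = x i q + x j p := by
  have : NeZero k := ⟨hk.ne'⟩
  by_contra! hfair
  have hdiff : ∀ i j : Fin 3, i ≠ j → Bijective (x i - x j) := fun i j hij =>
    (Fintype.bijective_iff_injective_and_card _).mpr
      ⟨injective_sub_of_forall_add_ne _ _ (hfair i j · · hij), by simp [ZMod.card]⟩
  have hsplit : x 0 - x 2 = (x 0 - x 1) + (x 1 - x 2) := (sub_add_sub_cancel _ _ _).symm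
  exact ZMod.sum_univ_ne_zero_of_even k hke <|
    Fintype.sum_univ_eq_zero_of_bijective_add (hdiff 0 1 (by decide)) (hdiff 1 2 (by decide))
      (hsplit ▸ hdiff 0 2 (by decide))
end

section
/- Define the graph G_k whose vertices are all functions f : ℤ/kℤ → ℤ/kℤ, with f and g adjacent iff f ≠ g and f − g is a bijection. If k is even and positive, then G_k is triangle-free. -/
/-!
If `f - g` is a bijection onto a finite abelian group `G`, then `∑ j, (f j - g j)` is the sum
`σ` of all elements of `G`; since `σ = -σ`, this holds for either orientation of an edge.
Summing the differences around a triangle `f, g, h` gives `σ + σ = σ`, so `σ = 0`.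
But in `ZMod (2m)` the elements sum to `m ≠ 0`.
-/

open Finset Function

section

variable (α G : Type*) [AddCommGroup G]

abbrev diffBijectiveGraph : SimpleGraph (α → G) :=
  SimpleGraph.fromRel fun f g => Bijective fun j => f j - g j

variable {α G} [Fintype α] [Fintype G]

theorem neg_sum_univ_id : -∑ x : G, x = ∑ x : G, x := by
  rw [← sum_neg_distrib]
  exact Fintype.sum_equiv (Equiv.neg G) _ _ fun _ => rfl

theorem sum_sub_eq_sum_univ_of_bijective {f g : α → G} (h : Bijective fun j => f j - g j) :
    ∑ j, (f j - g j) = ∑ x : G, x :=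
  Fintype.sum_bijective _ h _ _ fun _ => rfl

theorem sum_sub_eq_sum_univ_of_adj {f g : α → G} (h : (diffBijectiveGraph α G).Adj f g) :
    ∑ j, (f j - g j) = ∑ x : G, x := by
  rcases h.2 with hfg | hgf
  · exact sum_sub_eq_sum_univ_of_bijective hfg
  · rw [← neg_sum_univ_id, ← sum_sub_eq_sum_univ_of_bijective hgf, ← sum_neg_distrib]
    simp only [neg_sub]

theorem diffBijectiveGraph_cliqueFree_three (hG : ∑ x : G, x ≠ 0) :
    (diffBijectiveGraph α G).CliqueFree 3 := by
  classical
  intro s hs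
  obtain ⟨f, g, h, hfg, hfh, hgh, rfl⟩ := SimpleGraph.is3Clique_iff.1 hs
  have hsplit : ∑ j, (f j - h j) = ∑ j, (f j - g j) + ∑ j, (g j - h j) := by
    rw [← sum_add_distrib]
    simp only [sub_add_sub_cancel]
  rw [sum_sub_eq_sum_univ_of_adj hfg, sum_sub_eq_sum_univ_of_adj hfh,
    sum_sub_eq_sum_univ_of_adj hgh, left_eq_add] at hsplit
  exact hG hsplit

end

namespace ZMod

theorem sum_univ_eq_sum_range_s6 (k : ℕ) [NeZero k] :
    ∑ x : ZMod k, x = ∑ i ∈ range k, (i : ZMod k) :=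
  sum_nbij' val (↑) (fun x _ => mem_range.2 (val_lt x)) (fun _ _ => mem_univ _)
    (fun x _ => natCast_zmod_val x) (fun _ hi => val_cast_of_lt (mem_range.1 hi))
    (fun x _ => (natCast_zmod_val x).symm)

theorem sum_univ_of_even {k : ℕ} [NeZero k] (hk : Even k) : ∑ x : ZMod k, x = (k / 2 : ℕ) := by
  obtain ⟨m, rfl⟩ := hk
  -- `m (2m - 1) = 2m (m - 1) + m`, and `2m` vanishes in `ZMod (2m)`
  have gauss : (m + m) * (m + m - 1) / 2 = (m + m) * (m - 1) + m := by
    rcases m with _ | n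
    · rfl
    · rw [show n + 1 + (n + 1) - 1 = 2 * n + 1 by omega, Nat.add_sub_cancel]
      exact Nat.div_eq_of_eq_mul_left two_pos (by ring)
  rw [sum_univ_eq_sum_range_s6, ← Nat.cast_sum, sum_range_id, gauss, Nat.cast_add, Nat.cast_mul,
    natCast_self, zero_mul, zero_add]
  congr 1
  omega

theorem sum_univ_ne_zero_of_even_s6 {k : ℕ} [NeZero k] (hk : Even k) : ∑ x : ZMod k, x ≠ 0 := by
  rw [sum_univ_of_even hk, Ne, natCast_eq_zero_iff]
  intro hdvd
  obtain ⟨m, rfl⟩ := hk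
  have hm := NeZero.ne (m + m)
  have := Nat.le_of_dvd (by omega) hdvd
  omega

end ZMod

theorem G_k_triangle_free (k : ℕ) (hk : 0 < k) (hke : Even k) :
    (SimpleGraph.fromRel
      (fun f g : ZMod k → ZMod k =>
        Function.Bijective (fun j => f j - g j))).CliqueFree 3 := by
  have : NeZero k := ⟨hk.ne'⟩
  exact diffBijectiveGraph_cliqueFree_three (ZMod.sum_univ_ne_zero_of_even_s6 hke)
end

section
/- If k is prime, then the clique number of G_k is exactly k: the functions j ↦ i·j for i ∈ ℤ/kℤ form a clique of size k, and no clique has size larger than k. -/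
/-!
Two functions `f ≠ g` in a clique differ by an injective map, so `f 0 - f 1 ≠ g 0 - g 1`; hence
`f ↦ f 0 - f 1` embeds any clique into `ZMod k`. Conversely, over a field the linear maps
`j ↦ i * j` differ by `j ↦ (i - i') * j`, which is a bijection whenever `i ≠ i'`.
-/

def mulLeftFunEmbedding (R : Type*) [Semiring R] : R ↪ (R → R) :=
  ⟨fun i j => i * j, fun i i' h => by simpa using congrFun h 1⟩

theorem bijective_sub_comm {α β : Type*} [AddGroup β] {f g : α → β} :
    (Function.Bijective fun j => f j - g j) ↔ Function.Bijective fun j => g j - f j := by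
  have swap : ∀ u v : α → β,
      (Function.Bijective fun j => u j - v j) → Function.Bijective fun j => v j - u j :=
    fun u v h => by
      simpa only [Function.comp_def, Equiv.neg_apply, neg_sub] using (Equiv.neg β).bijective.comp h
  exact ⟨swap f g, swap g f⟩

namespace SimpleGraph

variable {α β : Type*}

variable (α β) in
def bijectiveSubGraph [Sub β] : SimpleGraph (α → β) :=
  fromRel fun f g => Function.Bijective fun j => f j - g j

theorem bijectiveSubGraph_adj [AddGroup β] {f g : α → β} :
    (bijectiveSubGraph α β).Adj f g ↔ f ≠ g ∧ Function.Bijective fun j => f j - g j := by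
  simp only [bijectiveSubGraph, fromRel_adj, ← bijective_sub_comm, or_self]

theorem card_le_of_isClique_bijectiveSubGraph [AddCommGroup β] [Fintype β] {a b : α}
    (hab : a ≠ b) {s : Finset (α → β)} (hs : (bijectiveSubGraph α β).IsClique (s : Set (α → β))) :
    s.card ≤ Fintype.card β := by
  have hinj : Set.InjOn (fun f : α → β => f a - f b) s := by
    intro f hf g hg hfg
    by_contra hne
    have hsub := ((bijectiveSubGraph_adj.mp (hs hf hg hne)).2.injective).ne hab
    exact hsub (sub_eq_sub_iff_sub_eq_sub.mp hfg)
  exact Finset.card_le_card_of_injOn _ (fun _ _ => Finset.mem_coe.mpr (Finset.mem_univ _)) hinj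
    |>.trans_eq Finset.card_univ

theorem isNClique_map_mulLeftFunEmbedding [DivisionRing β] [Fintype β] :
    (bijectiveSubGraph β β).IsNClique (Fintype.card β)
      (Finset.univ.map (mulLeftFunEmbedding β)) := by
  refine ⟨?_, by simp⟩
  rintro _ hf _ hg hne
  obtain ⟨i, -, rfl⟩ := Finset.mem_map.mp hf
  obtain ⟨i', -, rfl⟩ := Finset.mem_map.mp hg
  have hii' : i - i' ≠ 0 := sub_ne_zero.mpr fun h => hne (h ▸ rfl)
  refine bijectiveSubGraph_adj.mpr ⟨hne, ?_⟩
  have hmul : Function.Bijective fun j => (i - i') * j := (Equiv.mulLeft₀ _ hii').bijective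
  simp only [sub_mul] at hmul
  exact hmul

end SimpleGraph

open SimpleGraph in
theorem clique_number_prime (k : ℕ) (hk : k.Prime) :
    (∃ s : Finset (ZMod k → ZMod k),
        (SimpleGraph.fromRel
          (fun f g : ZMod k → ZMod k =>
            Function.Bijective (fun j => f j - g j))).IsNClique k s) ∧
      (∀ s : Finset (ZMod k → ZMod k),
        (SimpleGraph.fromRel
          (fun f g : ZMod k → ZMod k =>
            Function.Bijective (fun j => f j - g j))).IsClique ↑s →
        s.card ≤ k) := by
  have : Fact k.Prime := ⟨hk⟩
  refine ⟨⟨_, ZMod.card k ▸ isNClique_map_mulLeftFunEmbedding⟩, fun s hs => ?_⟩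
  exact (card_le_of_isClique_bijectiveSubGraph zero_ne_one hs).trans_eq (ZMod.card k)
end

section
/- Let A, B be disjoint finite sets with |A| = n, |B| = m, and let 𝒬 be a family of 4-element subsets of A ∪ B each having exactly 2 elements in A and 2 in B. Suppose every (k+3)-subset S with |S ∩ A| = 2 and |S ∩ B| = k+1 contains a member of 𝒬. Then |𝒬| ≥ C(n,2) · T(m, k+1, 2), where T(m, k+1, 2) is the minimum number of edges of a graph on m vertices with independence number less than k+1. -/
/-!
Split `𝒬` according to the pair `Q ∩ A`. For a fixed pair `P ⊆ A`, the `B`-parts of the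
quadruples lying over `P` form a graph on `B` meeting every `(k+1)`-subset `T ⊆ B`: apply the
covering hypothesis to `P ∪ T`. Hence each of the `C(n,2)` fibres has at least
`T(m, k+1, 2)` members.
-/

/-- `turanCov m r` : the minimum number of edges in a graph on `m` vertices such that
every `r`-subset of vertices contains an edge. -/
noncomputable def turanCov (m r : ℕ) : ℕ :=
  sInf {t : ℕ | ∃ E : Finset (Finset (Fin m)), E.card = t ∧
    (∀ e ∈ E, e.card = 2) ∧
    ∀ S : Finset (Fin m), S.card = r → ∃ e ∈ E, e ⊆ S}

open Finset

theorem turanCov_le_card {V : Type*} [DecidableEq V] {m r : ℕ} (B : Finset V)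
    (hB : B.card = m) (E : Finset (Finset V)) (hE : ∀ e ∈ E, e.card = 2)
    (hcov : ∀ T ⊆ B, T.card = r → ∃ e ∈ E, e ⊆ T) :
    turanCov m r ≤ E.card := by
  let φ : Fin m ↪ V :=
    (B.equivFinOfCardEq hB).symm.toEmbedding.trans (Function.Embedding.subtype _)
  have hφB : ∀ S : Finset (Fin m), S.map φ ⊆ B := by
    intro S x hx
    obtain ⟨y, -, rfl⟩ := mem_map.mp hx
    exact ((B.equivFinOfCardEq hB).symm y).2
  let E' : Finset (Finset (Fin m)) := univ.filter (fun e' => e'.map φ ∈ E)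
  have hE'cov : ∀ S : Finset (Fin m), S.card = r → ∃ e' ∈ E', e' ⊆ S := by
    intro S hS
    obtain ⟨e, heE, heS⟩ := hcov (S.map φ) (hφB S) (by rw [card_map, hS])
    refine ⟨S.filter (fun x => φ x ∈ e), ?_, filter_subset _ _⟩
    have : (S.filter (fun x => φ x ∈ e)).map φ = e := by
      change (S.filter ((· ∈ e) ∘ φ)).map φ = e
      rw [← filter_map, filter_mem_eq_inter, inter_eq_right.mpr heS]
    simpa [E', this] using heE
  calc turanCov m r ≤ E'.card := by
        refine Nat.sInf_le ⟨E', rfl, fun e' he' => ?_, hE'cov⟩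
        rw [← card_map φ]
        exact hE _ (mem_filter.mp he').2
    _ ≤ E.card :=
        card_le_card_of_injOn (fun e' => e'.map φ) (fun e' he' => (mem_filter.mp he').2)
          (map_injective φ).injOn

section Bipartite

variable {V : Type*} [DecidableEq V] {A B P T : Finset V}

theorem union_inter_left_of_disjoint (hAB : Disjoint A B) (hPA : P ⊆ A) (hTB : T ⊆ B) :
    (P ∪ T) ∩ A = P := by
  rw [union_inter_distrib_right, inter_eq_left.mpr hPA,
    disjoint_iff_inter_eq_empty.mp (disjoint_of_subset_left hTB hAB.symm), union_empty]

theorem union_inter_right_of_disjoint (hAB : Disjoint A B) (hPA : P ⊆ A) (hTB : T ⊆ B) :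
    (P ∪ T) ∩ B = T := by
  rw [union_comm, union_inter_left_of_disjoint hAB.symm hTB hPA]

theorem turanCov_le_card_filter_inter_eq {k m : ℕ} (hAB : Disjoint A B) (hB : B.card = m)
    (𝒬 : Finset (Finset V))
    (h𝒬 : ∀ Q ∈ 𝒬, (Q ∩ A).card = 2 ∧ (Q ∩ B).card = 2)
    (hcov : ∀ S : Finset V, S ⊆ A ∪ B → (S ∩ A).card = 2 →
      (S ∩ B).card = k + 1 → ∃ Q ∈ 𝒬, Q ⊆ S)
    (hPA : P ⊆ A) (hP : P.card = 2) :
    turanCov m (k + 1) ≤ (𝒬.filter (fun Q => Q ∩ A = P)).card := by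
  calc turanCov m (k + 1) ≤ ((𝒬.filter (fun Q => Q ∩ A = P)).image (· ∩ B)).card := by
        refine turanCov_le_card B hB _ ?_ fun T hTB hT => ?_
        · simp only [mem_image, mem_filter]
          rintro _ ⟨Q, ⟨hQ, -⟩, rfl⟩
          exact (h𝒬 Q hQ).2
        have hSA := union_inter_left_of_disjoint hAB hPA hTB
        have hSB := union_inter_right_of_disjoint hAB hPA hTB
        obtain ⟨Q, hQ, hQS⟩ := hcov (P ∪ T) (union_subset_union hPA hTB)
          (by rw [hSA, hP]) (by rw [hSB, hT])
        have hQA : Q ∩ A = P := eq_of_subset_of_card_le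
          (hSA ▸ inter_subset_inter_right hQS) (by rw [hP, (h𝒬 Q hQ).1])
        exact ⟨Q ∩ B, mem_image_of_mem _ (mem_filter.mpr ⟨hQ, hQA⟩),
          hSB ▸ inter_subset_inter_right hQS⟩
    _ ≤ _ := card_image_le

end Bipartite

theorem lower_bound_quadruples {V : Type*} [DecidableEq V]
    (k n m : ℕ) (A B : Finset V) (hAB : Disjoint A B)
    (hA : A.card = n) (hB : B.card = m)
    (𝒬 : Finset (Finset V))
    (h𝒬 : ∀ Q ∈ 𝒬, Q.card = 4 ∧ (Q ∩ A).card = 2 ∧ (Q ∩ B).card = 2)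
    (hcov : ∀ S : Finset V, S ⊆ A ∪ B → (S ∩ A).card = 2 →
      (S ∩ B).card = k + 1 → ∃ Q ∈ 𝒬, Q ⊆ S) :
    n.choose 2 * turanCov m (k + 1) ≤ 𝒬.card := by
  have hfibres : 𝒬.card = ∑ P ∈ A.powersetCard 2, (𝒬.filter (fun Q => Q ∩ A = P)).card :=
    card_eq_sum_card_fiberwise fun Q hQ =>
      mem_powersetCard.mpr ⟨inter_subset_right, (h𝒬 Q hQ).2.1⟩
  calc n.choose 2 * turanCov m (k + 1)
      = ∑ _P ∈ A.powersetCard 2, turanCov m (k + 1) := by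
        rw [sum_const, card_powersetCard, hA, smul_eq_mul]
    _ ≤ 𝒬.card := by
        rw [hfibres]
        refine sum_le_sum fun P hP => ?_
        obtain ⟨hPA, hPcard⟩ := mem_powersetCard.mp hP
        exact turanCov_le_card_filter_inter_eq hAB hB 𝒬 (fun Q hQ => (h𝒬 Q hQ).2) hcov
          hPA hPcard
end

section
/- Let X be an n×m matrix over ℤ/kℤ with m ≥ k+1, and let 𝒬 be the family of quadruples {a_i, a_j, b_p, b_q} (i<j, p<q) such that rows i,j and columns p,q of X form a fair 2×2 submatrix. Then for every pair of rows i<j and every (k+1)-subset C of columns, there exist p, q ∈ C with p ≠ q such that {a_i, a_j, b_p, b_q} ∈ 𝒬. -/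
theorem exists_ne_add_eq_add_swap_of_card_lt {G ι : Type*} [AddCommGroup G] [Fintype G]
    (f g : ι → G) {C : Finset ι} (hC : Fintype.card G < C.card) :
    ∃ p ∈ C, ∃ q ∈ C, p ≠ q ∧ f p + g q = f q + g p := by
  -- pigeonhole on the differences `f c - g c`
  obtain ⟨p, hp, q, hq, hpq, h⟩ :=
    Finset.exists_ne_map_eq_of_card_lt_of_maps_to (t := Finset.univ) (f := f - g)
      (by simpa using hC) fun c _ => Finset.mem_univ _
  exact ⟨p, hp, q, hq, hpq, by simpa [sub_eq_sub_iff_add_eq_add] using h⟩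

theorem fair_family_covers_general (k n m : ℕ) (hk : 1 ≤ k)
    (X : Fin n → Fin m → ZMod k) (i j : Fin n)
    (C : Finset (Fin m)) (hC : C.card = k + 1) :
    ∃ p ∈ C, ∃ q ∈ C, p ≠ q ∧ X i p + X j q = X i q + X j p := by
  have : NeZero k := ⟨by omega⟩
  exact exists_ne_add_eq_add_swap_of_card_lt (X i) (X j) (by simp [hC, ZMod.card])

theorem fair_family_covers (k n m : ℕ) (hk : 1 ≤ k) (hm : k + 1 ≤ m)
    (X : Fin n → Fin m → ZMod k) (i j : Fin n) (hij : i < j)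
    (C : Finset (Fin m)) (hC : C.card = k + 1) :
    ∃ p ∈ C, ∃ q ∈ C, p ≠ q ∧ X i p + X j q = X i q + X j p :=
  fair_family_covers_general k n m hk X i j C hC
end

section
/- For k ≥ 1, Q(n, m, 𝒫_{k2}) ≤ (1/k)·C(n,2)·C(m,2), where Q(n, m, 𝒫_{k2}) is the minimum size of a family 𝒬 of quadruples with 2 elements from an n-set A and 2 from an m-set B such that every subset with 2 elements from A and k+1 from B, and every subset with k+1 elements from A and 2 from B, contains a member of 𝒬. -/
/-!
Fill an `n × m` matrix `M` with entries in `ZMod k` and take as quadruples the `2 × 2`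
submatrices that are *fair*, i.e. whose two rows differ by a constant. Given two rows and
`k + 1` columns, the differences of the two rows take at most `k` values, so two columns
see the same difference and span a fair submatrix; the case of `k + 1` rows and two
columns is the transposed one. For fixed rows `a₁ ≠ a₂` and columns `b₁ ≠ b₂`, fairness is
the vanishing of the surjective additive map `M ↦ M a₁ b₁ - M a₂ b₁ - (M a₁ b₂ - M a₂ b₂)`,
so exactly a `1/k` fraction of all matrices makes a given submatrix fair, and some matrix
has at most `C(n,2) C(m,2) / k` fair submatrices.
-/

open Finset

theorem Finset.card_filter_isLeft {α β : Type*} (u : Finset (α ⊕ β)) :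
    #(u.filter fun v => v.isLeft) = #u.toLeft := by
  have : u.filter (fun v => v.isLeft) = u.toLeft.map .inl := by
    ext (a | b) <;> simp
  rw [this, card_map]

theorem Finset.card_filter_isRight {α β : Type*} (u : Finset (α ⊕ β)) :
    #(u.filter fun v => v.isRight) = #u.toRight := by
  have : u.filter (fun v => v.isRight) = u.toRight.map .inr := by
    ext (a | b) <;> simp
  rw [this, card_map]

theorem Finset.exists_card_filter_mul_le {X T : Type*} [Fintype X] [Nonempty X]
    (P : X → T → Prop) [∀ x t, Decidable (P x t)] (ts : Finset T) (k : ℕ)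
    (h : ∀ t ∈ ts, #{x | P x t} * k = Fintype.card X) :
    ∃ x, #{t ∈ ts | P x t} * k ≤ #ts := by
  have hsum : ∑ x, #{t ∈ ts | P x t} * k = ∑ _x : X, #ts :=
    calc ∑ x, #{t ∈ ts | P x t} * k = ∑ t ∈ ts, #{x | P x t} * k := by
          simp only [card_filter, sum_mul]; exact sum_comm
      _ = ∑ _t ∈ ts, Fintype.card X := sum_congr rfl h
      _ = ∑ _x : X, #ts := by simp [mul_comm]
  obtain ⟨x, -, hx⟩ := exists_le_of_sum_le univ_nonempty hsum.le
  exact ⟨x, hx⟩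

theorem AddMonoidHom.card_filter_eq_zero_mul_card_of_surjective {G H : Type*} [AddGroup G]
    [AddGroup H] [Fintype G] [Fintype H] [DecidableEq H] (f : G →+ H)
    (hf : Function.Surjective f) :
    #{x | f x = 0} * Fintype.card H = Fintype.card G := by
  have hker : #{x | f x = 0} = Nat.card f.ker := by
    rw [← Nat.card_eq_finsetCard]; simp [AddMonoidHom.mem_ker]
  rw [hker, ← Nat.card_eq_fintype_card, ← Nat.card_eq_fintype_card, ← f.ker.card_mul_index,
    AddSubgroup.index_ker, AddMonoidHom.range_eq_top.2 hf, AddSubgroup.card_top]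

variable {α β R : Type*}

def IsFair [Sub R] (M : α → β → R) (s : Finset α) (t : Finset β) : Prop :=
  ∀ a ∈ s, ∀ a' ∈ s, ∀ b ∈ t, ∀ b' ∈ t, M a b - M a' b = M a b' - M a' b'

instance [Sub R] [DecidableEq R] (M : α → β → R) (s : Finset α) (t : Finset β) :
    Decidable (IsFair M s t) :=
  inferInstanceAs (Decidable (∀ a ∈ s, ∀ a' ∈ s, ∀ b ∈ t, ∀ b' ∈ t, _))

section AddCommGroup

variable [AddCommGroup R]

theorem isFair_transpose_iff {M : α → β → R} {s : Finset α} {t : Finset β} :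
    IsFair (fun b a => M a b) t s ↔ IsFair M s t := by
  simp only [IsFair, sub_eq_sub_iff_sub_eq_sub]
  exact ⟨fun h a ha a' ha' b hb b' hb' => h b hb b' hb' a ha a' ha',
    fun h b hb b' hb' a ha a' ha' => h a ha a' ha' b hb b' hb'⟩

theorem isFair_pair_iff [DecidableEq α] [DecidableEq β] {M : α → β → R} {a₁ a₂ : α}
    {b₁ b₂ : β} : IsFair M {a₁, a₂} {b₁, b₂} ↔ M a₁ b₁ - M a₂ b₁ = M a₁ b₂ - M a₂ b₂ := by
  refine ⟨fun h => h a₁ (by simp) a₂ (by simp) b₁ (by simp) b₂ (by simp), fun h => ?_⟩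
  simp only [IsFair, mem_insert, mem_singleton]
  rintro a (rfl | rfl) a' (rfl | rfl) b (rfl | rfl) b' (rfl | rfl)
  all_goals grind

theorem exists_pair_subset_isFair [Fintype R] [DecidableEq β] (M : α → β → R) {s : Finset α}
    (hs : #s = 2) {t : Finset β} (ht : Fintype.card R < #t) :
    ∃ t' ⊆ t, #t' = 2 ∧ IsFair M s t' := by
  classical
  obtain ⟨a₁, a₂, -, rfl⟩ := card_eq_two.1 hs
  obtain ⟨b₁, hb₁, b₂, hb₂, hne, heq⟩ := exists_ne_map_eq_of_card_lt_of_maps_to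
    (t := univ) ht (f := fun b => M a₁ b - M a₂ b) (fun _ _ => mem_coe.2 (mem_univ _))
  exact ⟨{b₁, b₂}, by simp [insert_subset_iff, hb₁, hb₂], card_pair hne, isFair_pair_iff.2 heq⟩

def fairnessDefect (a₁ a₂ : α) (b₁ b₂ : β) : (α → β → R) →+ R :=
  AddMonoidHom.mk' (fun M => M a₁ b₁ - M a₂ b₁ - (M a₁ b₂ - M a₂ b₂)) fun M N => by
    simp only [Pi.add_apply]; abel

theorem fairnessDefect_surjective [DecidableEq α] [DecidableEq β] {a₁ a₂ : α} {b₁ b₂ : β}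
    (ha : a₁ ≠ a₂) (hb : b₁ ≠ b₂) :
    Function.Surjective (fairnessDefect (R := R) a₁ a₂ b₁ b₂) :=
  fun c => ⟨Pi.single a₁ (Pi.single b₁ c), by simp [fairnessDefect, ha.symm, hb.symm]⟩

variable [Fintype α] [Fintype β] [DecidableEq α] [DecidableEq β] [DecidableEq R]

theorem card_filter_isFair_mul_card [Fintype R] {s : Finset α} {t : Finset β} (hs : #s = 2)
    (ht : #t = 2) :
    #{M : α → β → R | IsFair M s t} * Fintype.card R = Fintype.card (α → β → R) := by
  obtain ⟨a₁, a₂, ha, rfl⟩ := card_eq_two.1 hs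
  obtain ⟨b₁, b₂, hb, rfl⟩ := card_eq_two.1 ht
  convert (fairnessDefect (R := R) a₁ a₂ b₁ b₂).card_filter_eq_zero_mul_card_of_surjective
    (fairnessDefect_surjective ha hb) using 4
  simp [isFair_pair_iff, fairnessDefect, sub_eq_zero]

def fairSubmatrices (M : α → β → R) : Finset (Finset α × Finset β) :=
  {p ∈ powersetCard 2 univ ×ˢ powersetCard 2 univ | IsFair M p.1 p.2}

theorem exists_card_fairSubmatrices_mul_le [Fintype R] :
    ∃ M : α → β → R,
      #(fairSubmatrices M) * Fintype.card R ≤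
        (Fintype.card α).choose 2 * (Fintype.card β).choose 2 := by
  obtain ⟨M, hM⟩ := exists_card_filter_mul_le (fun M p => IsFair M p.1 p.2)
    (powersetCard 2 (univ : Finset α) ×ˢ powersetCard 2 (univ : Finset β)) (Fintype.card R)
    fun p hp => by
      simp only [mem_product, mem_powersetCard_univ] at hp
      exact card_filter_isFair_mul_card hp.1 hp.2
  refine ⟨M, hM.trans_eq ?_⟩
  rw [card_product, card_powersetCard, card_powersetCard, card_univ, card_univ]

def fairQuadruples (M : α → β → R) : Finset (Finset (α ⊕ β)) :=
  (fairSubmatrices M).image fun p => p.1.disjSum p.2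

theorem card_fairQuadruples_le (M : α → β → R) : #(fairQuadruples M) ≤ #(fairSubmatrices M) :=
  card_image_le

theorem card_toLeft_of_mem_fairQuadruples {M : α → β → R} {Q : Finset (α ⊕ β)}
    (hQ : Q ∈ fairQuadruples M) : #Q.toLeft = 2 ∧ #Q.toRight = 2 := by
  obtain ⟨⟨s, t⟩, hst, rfl⟩ := mem_image.1 hQ
  simp only [fairSubmatrices, mem_filter, mem_product, mem_powersetCard_univ] at hst
  simpa using hst.1

theorem exists_mem_fairQuadruples_subset [Fintype R] (M : α → β → R) {S : Finset (α ⊕ β)}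
    (hS : #S.toLeft = 2 ∧ Fintype.card R < #S.toRight ∨
      Fintype.card R < #S.toLeft ∧ #S.toRight = 2) :
    ∃ Q ∈ fairQuadruples M, Q ⊆ S := by
  suffices ∃ s ⊆ S.toLeft, ∃ t ⊆ S.toRight, #s = 2 ∧ #t = 2 ∧ IsFair M s t by
    obtain ⟨s, hs, t, ht, hs2, ht2, hfair⟩ := this
    refine ⟨s.disjSum t, mem_image.2 ⟨(s, t), ?_, rfl⟩, disjSum_subset.2 ⟨hs, ht⟩⟩
    simp [fairSubmatrices, hs2, ht2, hfair]
  rcases hS with ⟨hl, hr⟩ | ⟨hl, hr⟩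
  · obtain ⟨t, ht, ht2, hfair⟩ := exists_pair_subset_isFair M hl hr
    exact ⟨_, subset_rfl, t, ht, hl, ht2, hfair⟩
  · obtain ⟨s, hs, hs2, hfair⟩ := exists_pair_subset_isFair (fun b a => M a b) hr hl
    exact ⟨s, hs, _, subset_rfl, hs2, hr, isFair_transpose_iff.1 hfair⟩

end AddCommGroup

theorem upper_bound_Q_k2 (k n m : ℕ) (hk : 1 ≤ k) :
    ∃ 𝒬 : Finset (Finset (Fin n ⊕ Fin m)),
      (∀ Q ∈ 𝒬, Q.card = 4 ∧ (Q.filter (fun v => v.isLeft)).card = 2 ∧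
        (Q.filter (fun v => v.isRight)).card = 2) ∧
      (∀ S : Finset (Fin n ⊕ Fin m),
        ((S.filter (fun v => v.isLeft)).card = 2 ∧
            (S.filter (fun v => v.isRight)).card = k + 1) ∨
        ((S.filter (fun v => v.isLeft)).card = k + 1 ∧
            (S.filter (fun v => v.isRight)).card = 2) →
        ∃ Q ∈ 𝒬, Q ⊆ S) ∧
      𝒬.card * k ≤ n.choose 2 * m.choose 2 := by
  have : NeZero k := ⟨by omega⟩
  obtain ⟨M, hM⟩ := exists_card_fairSubmatrices_mul_le (α := Fin n) (β := Fin m) (R := ZMod k)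
  simp only [ZMod.card, Fintype.card_fin] at hM
  refine ⟨fairQuadruples M, fun Q hQ => ?_, fun S hS => ?_, ?_⟩
  · obtain ⟨hl, hr⟩ := card_toLeft_of_mem_fairQuadruples hQ
    rw [card_filter_isLeft, card_filter_isRight, ← card_toLeft_add_card_toRight, hl, hr]
    exact ⟨rfl, rfl, rfl⟩
  · refine exists_mem_fairQuadruples_subset M ?_
    simp only [card_filter_isLeft, card_filter_isRight] at hS
    simp only [ZMod.card]
    omega
  · exact (Nat.mul_le_mul_right k (card_fairQuadruples_le M)).trans hM
end

section
/- Consider disjoint sets A, B with |A| = n, |B| = m, a 0,1-matrix X of size n×m, and the 4-graph H on A ∪ B whose edges are: all quadruples within A, all quadruples within B, and all quadruples {a_i, a_j, b_p, b_q} with x_{ip} + x_{iq} + x_{jp} + x_{jq} even. Then every 5-subset of A ∪ B contains at least one edge of H. -/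
/-!
A 5-set with at least four vertices on one side contains a quadruple inside `A` or inside `B`.
Otherwise it has three vertices on one side and two on the other, say rows `i₁, i₂, i₃` and
columns `p, q`. The row parities `X i p + X i q ∈ ZMod 2` take only two values, so two of the
three rows agree, and the rectangle sum over those two rows is twice that value, hence even.
-/

open Finset Sum

section

variable {α β : Type*}

lemma exists_subset_card_eq_forall_isLeft {S : Finset (α ⊕ β)} {k : ℕ} (hk : k ≤ #S.toLeft) :
    ∃ e ⊆ S, #e = k ∧ ∀ v ∈ e, v.isLeft := by
  obtain ⟨t, htS, rfl⟩ := exists_subset_card_eq hk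
  refine ⟨t.map .inl, ?_, card_map _, ?_⟩
  · simpa [map_subset_iff_subset_preimage, subset_iff] using htS
  · simp

lemma exists_subset_card_eq_forall_isRight {S : Finset (α ⊕ β)} {k : ℕ} (hk : k ≤ #S.toRight) :
    ∃ e ⊆ S, #e = k ∧ ∀ v ∈ e, v.isRight := by
  obtain ⟨t, htS, rfl⟩ := exists_subset_card_eq hk
  refine ⟨t.map .inr, ?_, card_map _, ?_⟩
  · simpa [map_subset_iff_subset_preimage, subset_iff] using htS
  · simp

lemma ZMod.exists_ne_map_eq_of_two_lt_card {s : Finset α} (hs : 2 < #s) (f : α → ZMod 2) :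
    ∃ a ∈ s, ∃ b ∈ s, a ≠ b ∧ f a = f b :=
  exists_ne_map_eq_of_card_lt_of_maps_to (t := univ) (by simpa using hs) fun _ _ ↦ mem_coe.2 (mem_univ _)

lemma CharTwo.add_add_add_eq_zero_of_add_eq_add {R : Type*} [Ring R] [CharP R 2] {a b c d : R}
    (h : a + b = c + d) : a + b + c + d = 0 := by
  rw [add_assoc (a + b), ← h, CharTwo.add_self_eq_zero]

variable [DecidableEq α] [DecidableEq β]

lemma card_inl_inl_inr_inr {i j : α} {p q : β} (hij : i ≠ j) (hpq : p ≠ q) :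
    #({inl i, inl j, inr p, inr q} : Finset (α ⊕ β)) = 4 := by
  rw [card_insert_of_notMem (by simp [hij]), card_insert_of_notMem (by simp),
    card_insert_of_notMem (by simp [hpq]), card_singleton]

lemma inl_inl_inr_inr_subset {S : Finset (α ⊕ β)} {i j : α} {p q : β} (hi : i ∈ S.toLeft)
    (hj : j ∈ S.toLeft) (hp : p ∈ S.toRight) (hq : q ∈ S.toRight) :
    {inl i, inl j, inr p, inr q} ⊆ S := by
  simp_all [insert_subset_iff]

variable (X : α → β → ZMod 2) {S : Finset (α ⊕ β)}

lemma exists_even_rectangle_of_three_rows (hrows : 2 < #S.toLeft) (hcols : 1 < #S.toRight) :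
    ∃ i j p q, i ≠ j ∧ p ≠ q ∧ {inl i, inl j, inr p, inr q} ⊆ S ∧
      X i p + X i q + X j p + X j q = 0 := by
  obtain ⟨p, hp, q, hq, hpq⟩ := one_lt_card.1 hcols
  obtain ⟨i, hi, j, hj, hij, hX⟩ :=
    ZMod.exists_ne_map_eq_of_two_lt_card hrows fun i ↦ X i p + X i q
  exact ⟨i, j, p, q, hij, hpq, inl_inl_inr_inr_subset hi hj hp hq,
    CharTwo.add_add_add_eq_zero_of_add_eq_add hX⟩

lemma exists_even_rectangle_of_three_cols (hrows : 1 < #S.toLeft) (hcols : 2 < #S.toRight) :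
    ∃ i j p q, i ≠ j ∧ p ≠ q ∧ {inl i, inl j, inr p, inr q} ⊆ S ∧
      X i p + X i q + X j p + X j q = 0 := by
  obtain ⟨i, hi, j, hj, hij⟩ := one_lt_card.1 hrows
  obtain ⟨p, hp, q, hq, hpq, hX⟩ :=
    ZMod.exists_ne_map_eq_of_two_lt_card hcols fun p ↦ X i p + X j p
  refine ⟨i, j, p, q, hij, hpq, inl_inl_inr_inr_subset hi hj hp hq, ?_⟩
  rw [add_right_comm (X i p)]
  exact CharTwo.add_add_add_eq_zero_of_add_eq_add hX

end

theorem giraud_construction (n m : ℕ) (X : Fin n → Fin m → ZMod 2)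
    (S : Finset (Fin n ⊕ Fin m)) (hS : S.card = 5) :
    ∃ e ⊆ S, e.card = 4 ∧
      ((∀ v ∈ e, v.isLeft = true) ∨ (∀ v ∈ e, v.isRight = true) ∨
        (∃ i j : Fin n, ∃ p q : Fin m, i ≠ j ∧ p ≠ q ∧
          e = {Sum.inl i, Sum.inl j, Sum.inr p, Sum.inr q} ∧
          X i p + X i q + X j p + X j q = 0)) := by
  by_cases hL : 4 ≤ #S.toLeft
  · obtain ⟨e, heS, he, hleft⟩ := exists_subset_card_eq_forall_isLeft hL
    exact ⟨e, heS, he, .inl hleft⟩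
  by_cases hR : 4 ≤ #S.toRight
  · obtain ⟨e, heS, he, hright⟩ := exists_subset_card_eq_forall_isRight hR
    exact ⟨e, heS, he, .inr (.inl hright)⟩
  have hsum : #S.toLeft + #S.toRight = 5 := card_toLeft_add_card_toRight.trans hS
  obtain ⟨i, j, p, q, hij, hpq, hsub, heven⟩ : ∃ i j p q, i ≠ j ∧ p ≠ q ∧
      {inl i, inl j, inr p, inr q} ⊆ S ∧ X i p + X i q + X j p + X j q = 0 := by
    rcases le_or_gt 3 #S.toLeft with hrows | hrows
    · exact exists_even_rectangle_of_three_rows X hrows (by omega)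
    · exact exists_even_rectangle_of_three_cols X (by omega) (by omega)
  exact ⟨_, hsub, card_inl_inl_inr_inr hij hpq, .inr (.inr ⟨i, j, p, q, hij, hpq, rfl, heven⟩)⟩
end
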